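/- arXiv:1211.4733 — 8 statements merged into one kernel-verified Lean document; each statement's English description precedes it below -/
import Mathlib

section
/- Let n be an odd perfect number and let α be a positive integer such that α ≤ h_p for every prime p dividing n, where h_p is the exponent of p in the prime factorisation of n. Then 2^{α+2} / (ζ(α+1) · (2^{α+1} − 1)) < ∏_{p | n} ∑_{i=0}^{α} p^{-i}, where ζ is the Riemann zeta function. -/
/-!
Multiplicativity of `σ` gives `σ(n)/n = ∏_{p ∣ n} ∑_{i ≤ h_p} p^{-i}`, which equals `2` for
perfect `n`. Each factor is less than `(1 - 1/p)⁻¹ = (∑_{i ≤ α} p^{-i}) (1 - p^{-(α+1)})⁻¹`, and by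
the Euler product `∏_{p ∣ n} (1 - p^{-(α+1)})⁻¹` is the sum of `m^{-(α+1)}` over the `m` built from
primes dividing `n`. These `m` are odd, so that sum is at most `(1 - 2^{-(α+1)}) ζ(α+1)`.
-/

open Finset

section GeomSum

variable {K : Type*} [Field K] {x : K}

theorem geom_sum_mul_inv_one_sub_pow {m : ℕ} (hx : x ^ m ≠ 1) :
    (∑ i ∈ range m, x ^ i) * (1 - x ^ m)⁻¹ = (1 - x)⁻¹ := by
  have hS : ∑ i ∈ range m, x ^ i ≠ 0 :=
    left_ne_zero_of_mul (geom_sum_mul_neg x m ▸ sub_ne_zero.mpr hx.symm)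
  rw [← geom_sum_mul_neg x m, mul_inv, ← mul_assoc, mul_inv_cancel₀ hS, one_mul]

theorem geom_sum_inv_eq_geom_sum_div_pow (hx : x ≠ 0) (h : ℕ) :
    ∑ i ∈ range (h + 1), x⁻¹ ^ i = (∑ i ∈ range (h + 1), x ^ i) / x ^ h := by
  rw [eq_div_iff (pow_ne_zero h hx), sum_mul, ← sum_range_reflect]
  refine sum_congr rfl fun i hi => ?_
  obtain ⟨j, rfl⟩ := Nat.exists_eq_add_of_le (Nat.lt_succ_iff.mp (mem_range.mp hi))
  rw [Nat.add_sub_cancel, Nat.add_sub_cancel_left, pow_add, inv_pow]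
  field_simp

end GeomSum

theorem geom_sum_lt_geom_sum_mul_inv_one_sub_pow {x : ℝ} (hx0 : 0 < x) (hx1 : x < 1) {m : ℕ}
    (hm : m ≠ 0) (n : ℕ) :
    ∑ i ∈ range n, x ^ i < (∑ i ∈ range m, x ^ i) * (1 - x ^ m)⁻¹ := by
  rw [geom_sum_mul_inv_one_sub_pow (pow_lt_one₀ hx0.le hx1 hm).ne, inv_eq_one_div,
    lt_div_iff₀ (sub_pos.mpr hx1), geom_sum_mul_neg]
  linarith [pow_pos hx0 n]

theorem prod_geom_sum_inv_lt {s : Finset ℕ} (hs : ∀ p ∈ s, 1 < p) (hne : s.Nonempty)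
    (h : ℕ → ℕ) {m : ℕ} (hm : m ≠ 0) :
    ∏ p ∈ s, ∑ i ∈ range (h p + 1), ((p : ℝ)⁻¹) ^ i <
      (∏ p ∈ s, ∑ i ∈ range m, ((p : ℝ)⁻¹) ^ i) * ∏ p ∈ s, (1 - ((p : ℝ) ^ m)⁻¹)⁻¹ := by
  rw [← prod_mul_distrib]
  refine prod_lt_prod_of_nonempty (fun p hp => ?_) (fun p hp => ?_) hne
  · have : (1 : ℝ) < p := by exact_mod_cast hs p hp
    exact sum_pos (fun i _ => by positivity) nonempty_range_add_one
  · have hp : (1 : ℝ) < p := by exact_mod_cast hs p hp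
    rw [← inv_pow]
    exact geom_sum_lt_geom_sum_mul_inv_one_sub_pow (by positivity) (inv_lt_one_of_one_lt₀ hp) hm _

theorem Nat.prod_primeFactors_geom_sum_inv {n : ℕ} (hn : n ≠ 0) :
    ∏ p ∈ n.primeFactors, ∑ i ∈ range (n.factorization p + 1), ((p : ℝ)⁻¹) ^ i =
      (∑ d ∈ n.divisors, d : ℕ) / n := by
  have hp : ∀ p ∈ n.primeFactors, (p : ℝ) ≠ 0 := fun p hp =>
    Nat.cast_ne_zero.mpr (Nat.prime_of_mem_primeFactors hp).ne_zero
  rw [prod_congr rfl fun p h => geom_sum_inv_eq_geom_sum_div_pow (hp p h) _, prod_div_distrib,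
    Nat.sum_divisors hn]
  congr 1
  · push_cast; rfl
  · conv_rhs => rw [← Nat.prod_factorization_pow_eq_self hn]
    rw [Finsupp.prod, Nat.support_factorization]
    push_cast; rfl

theorem Nat.Perfect.prod_primeFactors_geom_sum_inv {n : ℕ} (hn : n.Perfect) :
    ∏ p ∈ n.primeFactors, ∑ i ∈ range (n.factorization p + 1), ((p : ℝ)⁻¹) ^ i = 2 := by
  rw [Nat.prod_primeFactors_geom_sum_inv hn.2.ne',
    (Nat.perfect_iff_sum_divisors_eq_two_mul hn.2).mp hn, Nat.cast_mul,
    mul_div_cancel_right₀ _ (Nat.cast_ne_zero.mpr hn.2.ne')]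
  norm_num

theorem Nat.odd_of_mem_factoredNumbers {s : Finset ℕ} (h2 : 2 ∉ s) {m : ℕ}
    (hm : m ∈ Nat.factoredNumbers s) : Odd m :=
  Nat.not_even_iff_odd.mp fun he => h2 <| hm.2 2 <|
    (Nat.mem_primeFactorsList hm.1).mpr ⟨Nat.prime_two, even_iff_two_dvd.mp he⟩

section InvPow

variable {k : ℕ}

-- The `m = 0` terms are `0⁻¹ = 0`, so `∑' m : ℕ, ((m : ℝ) ^ k)⁻¹` is `ζ(k)`.
theorem tsum_inv_pow_odd (hk : 1 < k) :
    ∑' m : ℕ, (((2 * m + 1 : ℕ) : ℝ) ^ k)⁻¹ =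
      (1 - ((2 : ℝ) ^ k)⁻¹) * ∑' m : ℕ, ((m : ℝ) ^ k)⁻¹ := by
  have hs := Real.summable_nat_pow_inv.mpr hk
  have heven : ∑' m : ℕ, (((2 * m : ℕ) : ℝ) ^ k)⁻¹ =
      ((2 : ℝ) ^ k)⁻¹ * ∑' m : ℕ, ((m : ℝ) ^ k)⁻¹ := by
    rw [← tsum_mul_left]
    exact tsum_congr fun m => by push_cast; rw [mul_pow, mul_inv]
  have hsplit := tsum_even_add_odd (f := fun m : ℕ => ((m : ℝ) ^ k)⁻¹)
    (hs.comp_injective fun a b h => by omega) (hs.comp_injective fun a b h => by omega)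
  rw [heven] at hsplit
  linear_combination hsplit

theorem prod_inv_one_sub_inv_pow_le_tsum_odd (hk : 1 < k) {s : Finset ℕ}
    (hs : ∀ p ∈ s, p.Prime) (h2 : 2 ∉ s) :
    ∏ p ∈ s, (1 - ((p : ℝ) ^ k)⁻¹)⁻¹ ≤ ∑' m : ℕ, (((2 * m + 1 : ℕ) : ℝ) ^ k)⁻¹ := by
  let f : ℕ →* ℝ := invMonoidHom.comp ((powMonoidHom k).comp (Nat.castRingHom ℝ : ℕ →* ℝ))
  have hf : ∀ m, f m = ((m : ℝ) ^ k)⁻¹ := fun m => rfl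
  have hsum : Summable f := Real.summable_nat_pow_inv.mpr hk
  have heuler := EulerProduct.prod_filter_prime_geometric_eq_tsum_factoredNumbers hsum s
  rw [filter_true_of_mem hs] at heuler
  simp only [hf] at heuler
  rw [heuler]
  refine Summable.tsum_le_tsum_of_inj (fun m => (m : ℕ) / 2) ?_ (fun _ _ => by positivity) ?_
    (hsum.subtype _) (hsum.comp_injective fun a b h => by simpa using h)
  · intro a b hab
    apply Subtype.ext
    rw [← Nat.two_mul_div_two_add_one_of_odd (Nat.odd_of_mem_factoredNumbers h2 a.2),
      ← Nat.two_mul_div_two_add_one_of_odd (Nat.odd_of_mem_factoredNumbers h2 b.2)]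
    exact congrArg (2 * · + 1) hab
  · intro m
    rw [Nat.two_mul_div_two_add_one_of_odd (Nat.odd_of_mem_factoredNumbers h2 m.2)]

end InvPow

theorem opn_lower_bound_general (n α : ℕ) (hn : Nat.Perfect n) (hodd : Odd n) (hα : 0 < α) :
    (2 : ℝ) ^ (α + 2) /
        ((∑' k : ℕ, (1 : ℝ) / ((k : ℝ) + 1) ^ (α + 1)) * ((2 : ℝ) ^ (α + 1) - 1)) <
      ∏ p ∈ n.primeFactors,
        ∑ i ∈ Finset.range (α + 1), (1 : ℝ) / (p : ℝ) ^ i := by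
  have hk : 1 < α + 1 := by omega
  have hsum := Real.summable_nat_pow_inv.mpr hk
  have hprime : ∀ p ∈ n.primeFactors, p.Prime := fun p => Nat.prime_of_mem_primeFactors
  have h2 : 2 ∉ n.primeFactors := fun h =>
    Nat.not_even_iff_odd.mpr hodd (even_iff_two_dvd.mpr (Nat.dvd_of_mem_primeFactors h))
  have hζ : ∑' k : ℕ, (1 : ℝ) / ((k : ℝ) + 1) ^ (α + 1) = ∑' m : ℕ, ((m : ℝ) ^ (α + 1))⁻¹ := by
    rw [hsum.tsum_eq_zero_add]
    simp
  have hT := hn.prod_primeFactors_geom_sum_inv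
  have hne : n.primeFactors.Nonempty := nonempty_iff_ne_empty.mpr fun h => by simp [h] at hT
  set Z := ∑' m : ℕ, ((m : ℝ) ^ (α + 1))⁻¹
  set A := ∏ p ∈ n.primeFactors, ∑ i ∈ range (α + 1), ((p : ℝ)⁻¹) ^ i
  have hA : ∏ p ∈ n.primeFactors, ∑ i ∈ range (α + 1), (1 : ℝ) / (p : ℝ) ^ i = A := by
    simp only [A, one_div, inv_pow]
  have h2lt : 2 < A * ((1 - ((2 : ℝ) ^ (α + 1))⁻¹) * Z) := calc
    (2 : ℝ) < A * ∏ p ∈ n.primeFactors, (1 - ((p : ℝ) ^ (α + 1))⁻¹)⁻¹ :=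
      hT ▸ prod_geom_sum_inv_lt (fun p hp => (hprime p hp).one_lt) hne _ (Nat.succ_ne_zero α)
    _ ≤ A * ((1 - ((2 : ℝ) ^ (α + 1))⁻¹) * Z) := by
      gcongr
      rw [← tsum_inv_pow_odd hk]
      exact prod_inv_one_sub_inv_pow_le_tsum_odd hk hprime h2
  have hZ : 0 < Z := hsum.tsum_pos (fun _ => by positivity) 1 (by norm_num)
  have hy : (1 : ℝ) < 2 ^ (α + 1) := one_lt_pow₀ one_lt_two (Nat.succ_ne_zero α)
  rw [hζ, hA, div_lt_iff₀ (mul_pos hZ (sub_pos.mpr hy))]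
  calc (2 : ℝ) ^ (α + 2) = 2 * 2 ^ (α + 1) := pow_succ' 2 (α + 1)
    _ < A * ((1 - ((2 : ℝ) ^ (α + 1))⁻¹) * Z) * 2 ^ (α + 1) := by gcongr
    _ = A * (Z * (2 ^ (α + 1) - 1)) := by field_simp

/-- If `n` is an odd perfect number and `α` is a positive integer with `α ≤ h_p` for every
prime `p ∣ n` (`h_p` the exponent of `p` in `n`), then
`2^(α+2) / (ζ(α+1) · (2^(α+1) − 1)) < ∏_{p ∣ n} ∑_{i=0}^{α} p^{-i}`,
where `ζ(α+1) = ∑_{k ≥ 1} 1/k^(α+1)` is the Riemann zeta function. -/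
theorem opn_lower_bound (n α : ℕ) (hn : Nat.Perfect n) (hodd : Odd n) (hα : 0 < α)
    (hle : ∀ p ∈ n.primeFactors, α ≤ n.factorization p) :
    (2 : ℝ) ^ (α + 2) /
        ((∑' k : ℕ, (1 : ℝ) / ((k : ℝ) + 1) ^ (α + 1)) * ((2 : ℝ) ^ (α + 1) - 1)) <
      ∏ p ∈ n.primeFactors,
        ∑ i ∈ Finset.range (α + 1), (1 : ℝ) / (p : ℝ) ^ i :=
  opn_lower_bound_general n α hn hodd hα
end

section
/- If n is an odd perfect number, then 16/π² < ∏_{p | n} (1 + 1/p) < 2, where the product runs over the distinct prime factors p of n. -/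
/-!
The abundancy index `σ(n)/n` of `n` is the product over `p ∣ n` of the local factors
`1 + 1/p + ⋯ + 1/p^a` (where `p^a ∥ n`), each of which lies in `[1 + 1/p, (1 - 1/p)⁻¹)`, and is `2`
for a perfect `n`. The upper bound is strict because an odd perfect number is not squarefree: for
squarefree `n` the divisor sum `∏ (p + 1)` is divisible by `2^ω(n)`, whereas `2n ≡ 2 mod 4`, so `n`
would be `1` or a prime. For the lower bound, `(1 - 1/p)⁻¹ = (1 + 1/p)(1 - 1/p²)⁻¹`, and by the
Euler product for `ζ(2)` the product of `(1 - 1/p²)⁻¹` over odd primes is at most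
`(3/4) ζ(2) = π²/8`; hence `2 < (π²/8) ∏ (1 + 1/p)`.
-/

open Finset Real

section GeomSum

variable {K : Type*} [Field K]

lemma geom_sum_div_pow {x : K} (hx : x ≠ 0) (a : ℕ) :
    (∑ k ∈ range (a + 1), x ^ k) / x ^ a = ∑ k ∈ range (a + 1), x⁻¹ ^ k := by
  rw [← sum_range_reflect, sum_div]
  refine sum_congr rfl fun k hk => ?_
  rw [add_tsub_cancel_right, pow_sub₀ x hx (Nat.lt_succ_iff.mp (mem_range.mp hk)),
    mul_div_cancel_left₀ _ (pow_ne_zero a hx), inv_pow]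

lemma inv_one_sub_eq_one_add_mul_inv_one_sub_sq {r : K} (hr : 1 + r ≠ 0) :
    (1 - r)⁻¹ = (1 + r) * (1 - r ^ 2)⁻¹ := by
  rw [show 1 - r ^ 2 = (1 - r) * (1 + r) by ring, mul_inv, mul_left_comm,
    mul_inv_cancel₀ hr, mul_one]

variable [LinearOrder K] [IsStrictOrderedRing K]

lemma one_add_le_geom_sum {r : K} (hr : 0 ≤ r) {a : ℕ} (ha : 1 ≤ a) :
    1 + r ≤ ∑ k ∈ range (a + 1), r ^ k := by
  calc 1 + r = ∑ k ∈ range 2, r ^ k := by simp [sum_range_succ]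
    _ ≤ ∑ k ∈ range (a + 1), r ^ k :=
      sum_le_sum_of_subset_of_nonneg (range_subset_range.mpr (by omega))
        fun k _ _ => by positivity

lemma one_add_lt_geom_sum {r : K} (hr : 0 < r) {a : ℕ} (ha : 2 ≤ a) :
    1 + r < ∑ k ∈ range (a + 1), r ^ k := by
  calc 1 + r = ∑ k ∈ range 2, r ^ k := by simp [sum_range_succ]
    _ < ∑ k ∈ range (a + 1), r ^ k :=
      sum_lt_sum_of_subset (range_subset_range.mpr (by omega)) (i := 2)
        (mem_range.mpr (by omega)) (by simp) (by positivity) fun k _ _ => by positivity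

lemma geom_sum_lt_inv_one_sub {r : K} (h0 : 0 < r) (h1 : r < 1) (m : ℕ) :
    ∑ k ∈ range m, r ^ k < (1 - r)⁻¹ := by
  rw [geom_sum_eq h1.ne, ← neg_div_neg_eq, neg_sub, neg_sub, inv_eq_one_div]
  exact div_lt_div_of_pos_right (by linarith [pow_pos h0 m]) (by linarith)

end GeomSum

namespace Nat

lemma one_le_factorization_of_mem_primeFactors {n p : ℕ} (hp : p ∈ n.primeFactors) :
    1 ≤ n.factorization p :=
  one_le_iff_ne_zero.mpr <| Finsupp.mem_support_iff.mp (n.support_factorization ▸ hp)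

lemma cast_abundancyIndex_eq_prod_geom_sum {K : Type*} [Field K] [CharZero K] {n : ℕ}
    (hn : n ≠ 0) : (n.abundancyIndex : K) =
      ∏ p ∈ n.primeFactors, ∑ k ∈ range (n.factorization p + 1), (p : K)⁻¹ ^ k := by
  have hn' : (n : K) = ∏ p ∈ n.primeFactors, (p : K) ^ n.factorization p := by
    exact_mod_cast prod_primeFactors_pow_factorization hn
  rw [abundancyIndex, Rat.cast_div, Rat.cast_natCast, Rat.cast_natCast, sum_divisors hn, hn']
  push_cast
  rw [← prod_div_distrib]
  exact prod_congr rfl fun p hp =>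
    geom_sum_div_pow (by exact_mod_cast (prime_of_mem_primeFactors hp).ne_zero) _

section AbundancyIndexBounds

variable {K : Type*} [Field K] [LinearOrder K] [IsStrictOrderedRing K]

lemma prod_one_add_inv_lt_cast_abundancyIndex {n : ℕ} (hn : n ≠ 0) (hsq : ¬Squarefree n) :
    ∏ p ∈ n.primeFactors, (1 + (p : K)⁻¹) < n.abundancyIndex := by
  rw [cast_abundancyIndex_eq_prod_geom_sum hn]
  obtain ⟨q, hq⟩ : ∃ q, 1 < n.factorization q := by
    simpa [squarefree_iff_factorization_le_one hn] using hsq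
  have hq_mem : q ∈ n.primeFactors := by
    rw [← support_factorization]
    exact Finsupp.mem_support_iff.mpr (by omega)
  have hq_pos : (0 : K) < q := by exact_mod_cast (prime_of_mem_primeFactors hq_mem).pos
  exact Finset.prod_lt_prod (fun p _ => by positivity)
    (fun p hp => one_add_le_geom_sum (by positivity) (one_le_factorization_of_mem_primeFactors hp))
    ⟨q, hq_mem, one_add_lt_geom_sum (inv_pos.mpr hq_pos) hq⟩

lemma cast_abundancyIndex_lt_prod_inv_one_sub_inv {n : ℕ} (hn : 1 < n) :
    (n.abundancyIndex : K) < ∏ p ∈ n.primeFactors, (1 - (p : K)⁻¹)⁻¹ := by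
  rw [cast_abundancyIndex_eq_prod_geom_sum (by omega)]
  refine prod_lt_prod_of_nonempty (fun p _ => geom_sum_pos (by positivity) (by omega))
    (fun p hp => ?_) (nonempty_primeFactors.mpr hn)
  have hp : (1 : K) < p := by exact_mod_cast (prime_of_mem_primeFactors hp).one_lt
  exact geom_sum_lt_inv_one_sub (by positivity) (inv_lt_one_of_one_lt₀ hp) _

end AbundancyIndexBounds

lemma Perfect.abundancyIndex_eq_two {n : ℕ} (h : n.Perfect) : n.abundancyIndex = 2 := by
  rw [abundancyIndex, (perfect_iff_sum_divisors_eq_two_mul h.2).mp h]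
  push_cast
  field_simp [h.2.ne']

lemma Perfect.one_lt {n : ℕ} (h : n.Perfect) : 1 < n := by
  refine lt_of_le_of_ne h.2 fun h1 => ?_
  subst h1
  simp [Perfect] at h

lemma sum_divisors_eq_prod_add_one_of_squarefree {n : ℕ} (h : Squarefree n) :
    ∑ d ∈ n.divisors, d = ∏ p ∈ n.primeFactors, (p + 1) := by
  rw [sum_divisors h.ne_zero]
  refine prod_congr rfl fun p hp => ?_
  rw [factorization_eq_one_of_squarefree h (prime_of_mem_primeFactors hp)
    (dvd_of_mem_primeFactors hp)]
  simp [sum_range_succ, add_comm]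

lemma two_pow_card_dvd_prod_add_one {s : Finset ℕ} (hs : ∀ p ∈ s, Odd p) :
    2 ^ #s ∣ ∏ p ∈ s, (p + 1) := by
  rw [← prod_const]
  exact prod_dvd_prod_of_dvd _ _ fun p hp => (hs p hp).add_one.two_dvd

lemma Perfect.not_squarefree_of_odd {n : ℕ} (h : n.Perfect) (hodd : Odd n) :
    ¬Squarefree n := by
  intro hsq
  have hdvd : 2 ^ #n.primeFactors ∣ 2 * n := by
    rw [← (perfect_iff_sum_divisors_eq_two_mul h.2).mp h,
      sum_divisors_eq_prod_add_one_of_squarefree hsq]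
    exact two_pow_card_dvd_prod_add_one fun p hp => hodd.of_dvd_nat (dvd_of_mem_primeFactors hp)
  have hcard : #n.primeFactors ≤ 1 := by
    by_contra! hcard
    have h4 : 4 ∣ 2 * n := (pow_dvd_pow 2 hcard).trans hdvd
    have := hodd.not_two_dvd_nat
    omega
  obtain ⟨p, hp⟩ := card_le_one_iff_subset_singleton.mp hcard
  rcases subset_singleton_iff.mp hp with h_empty | h_single
  · have := h.one_lt
    rw [primeFactors_eq_empty] at h_empty
    omega
  · have hpn : n = p := by
      rw [← prod_primeFactors_of_squarefree hsq, h_single, prod_singleton]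
    exact (prime_of_mem_primeFactors (h_single ▸ mem_singleton_self p)).not_perfect (hpn ▸ h)

end Nat

lemma prod_filter_prime_inv_one_sub_inv_sq_le (s : Finset ℕ) :
    ∏ p ∈ s with p.Prime, (1 - (p : ℝ)⁻¹ ^ 2)⁻¹ ≤ π ^ 2 / 6 := by
  let f : ℕ →* ℝ := (powMonoidHom 2).comp (invMonoidHom.comp (Nat.castRingHom ℝ : ℕ →* ℝ))
  have hf (m : ℕ) : f m = (m : ℝ)⁻¹ ^ 2 := rfl
  have hf_lt {p : ℕ} (hp : p.Prime) : ‖f p‖ < 1 := by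
    have : (1 : ℝ) < p := by exact_mod_cast hp.one_lt
    rw [hf, norm_pow, norm_inv, Real.norm_natCast]
    exact pow_lt_one₀ (by positivity) (inv_lt_one_of_one_lt₀ this) two_ne_zero
  have hzeta : HasSum (fun m : ℕ => f m) (π ^ 2 / 6) := by
    simpa [hf, one_div, inv_pow] using hasSum_zeta_two
  -- the left side is the sum of `1/m²` over the `s`-factored numbers `m`
  obtain ⟨-, hsum⟩ :=
    EulerProduct.summable_and_hasSum_factoredNumbers_prod_filter_prime_geometric hf_lt s
  simp only [hf] at hsum
  rw [← hsum.tsum_eq, ← hzeta.tsum_eq]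
  exact hzeta.summable.tsum_subtype_le _ _ fun m => by rw [hf]; positivity

lemma prod_inv_one_sub_inv_sq_le_of_two_notMem {s : Finset ℕ} (hs : ∀ p ∈ s, p.Prime)
    (h2 : 2 ∉ s) : ∏ p ∈ s, (1 - (p : ℝ)⁻¹ ^ 2)⁻¹ ≤ π ^ 2 / 8 := by
  have h := prod_filter_prime_inv_one_sub_inv_sq_le (insert 2 s)
  rw [filter_true_of_mem (by simpa [Nat.prime_two] using hs), prod_insert h2,
    show (1 - ((2 : ℕ) : ℝ)⁻¹ ^ 2)⁻¹ = 4 / 3 by norm_num] at h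
  linarith

/-- If `n` is an odd perfect number, then `16/π² < ∏_{p ∣ n} (1 + 1/p) < 2`. -/
theorem opn_alpha_one_bounds (n : ℕ) (hn : Nat.Perfect n) (hodd : Odd n) :
    16 / Real.pi ^ 2 < ∏ p ∈ n.primeFactors, (1 + 1 / (p : ℝ)) ∧
      ∏ p ∈ n.primeFactors, (1 + 1 / (p : ℝ)) < 2 := by
  have hupper := Nat.prod_one_add_inv_lt_cast_abundancyIndex (K := ℝ) hn.2.ne'
    (hn.not_squarefree_of_odd hodd)
  have hlower := Nat.cast_abundancyIndex_lt_prod_inv_one_sub_inv (K := ℝ) hn.one_lt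
  rw [hn.abundancyIndex_eq_two, Rat.cast_ofNat] at hupper hlower
  rw [prod_congr rfl fun p _ => inv_one_sub_eq_one_add_mul_inv_one_sub_sq (by positivity),
    prod_mul_distrib] at hlower
  have hEuler : ∏ p ∈ n.primeFactors, (1 - (p : ℝ)⁻¹ ^ 2)⁻¹ ≤ π ^ 2 / 8 :=
    prod_inv_one_sub_inv_sq_le_of_two_notMem (fun p hp => Nat.prime_of_mem_primeFactors hp)
      fun h2 => hodd.not_two_dvd_nat (Nat.dvd_of_mem_primeFactors h2)
  have hpos : 0 < ∏ p ∈ n.primeFactors, (1 + (p : ℝ)⁻¹) := by positivity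
  have hlower' : 2 < (∏ p ∈ n.primeFactors, (1 + (p : ℝ)⁻¹)) * (π ^ 2 / 8) :=
    hlower.trans_le (mul_le_mul_of_nonneg_left hEuler hpos.le)
  simp only [one_div]
  refine ⟨?_, hupper⟩
  rw [div_lt_iff₀ (by positivity)]
  linarith
end

section
/- Let n be an odd perfect number, let q be a prime dividing n with h_q = 1, and suppose h_p ≥ 2 for every other prime p dividing n, where h_p is the exponent of p in the prime factorisation of n. Then 16·q³ / (7·ζ(3)·(q³ − 1)) < (1 + 1/q) · ∏_{p | n, p ≠ q} (1 + 1/p + 1/p²), where the product runs over the distinct prime factors p of n other than q. -/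
/-!
Write `e_p` for the exponent of `p` in `n`. Perfectness gives
`2 = σ(n)/n = (1 + 1/q) · ∏_{p ≠ q} σ(p^{e_p})/p^{e_p}`, and each factor satisfies
`σ(p^e)/p^e < p/(p - 1) = (1 + 1/p + 1/p²)/(1 - 1/p³)`, whatever `e` is.
On the other hand the Euler product of `ζ(3)` over the primes dividing `2n` is a partial
product, hence `ζ(3) · (1 - 1/2³)(1 - 1/q³) ∏_{p ≠ q} (1 - 1/p³) > 1`, the factor `7/8` at `2`
being separate because `n` is odd. Eliminating `∏_{p ≠ q} (1 - 1/p³)` between the two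
inequalities gives the bound.
-/

open Finset

noncomputable def Nat.oneDivPowHom (s : ℕ) : ℕ →* ℝ where
  toFun m := 1 / (m : ℝ) ^ s
  map_one' := by simp
  map_mul' a b := by push_cast; rw [mul_pow, one_div_mul_one_div]

lemma Nat.oneDivPowHom_apply (s m : ℕ) : Nat.oneDivPowHom s m = 1 / (m : ℝ) ^ s := rfl

lemma Nat.summable_oneDivPowHom {s : ℕ} (hs : 1 < s) : Summable (Nat.oneDivPowHom s) :=
  Real.summable_one_div_nat_pow.mpr hs

lemma one_lt_cast_of_mem_primeFactors {n p : ℕ} (hp : p ∈ n.primeFactors) : (1 : ℝ) < p := by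
  exact_mod_cast (Nat.prime_of_mem_primeFactors hp).one_lt

lemma one_sub_one_div_pow_pos {x : ℝ} (hx : 1 < x) {s : ℕ} (hs : s ≠ 0) : 0 < 1 - 1 / x ^ s :=
  sub_pos.mpr ((div_lt_one (pow_pos (one_pos.trans hx) s)).mpr (one_lt_pow₀ hx hs))

lemma prod_one_sub_one_div_pow_pos {t : Finset ℕ} (ht : ∀ p ∈ t, p.Prime) {s : ℕ} (hs : s ≠ 0) :
    0 < ∏ p ∈ t, (1 - 1 / (p : ℝ) ^ s) :=
  prod_pos fun p hp => one_sub_one_div_pow_pos (by exact_mod_cast (ht p hp).one_lt) hs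

/-- `∏_{p ∈ t} (1 - 1/p^s)⁻¹` sums `1/m^s` only over the `m` whose prime factors lie in `t`,
so it misses the terms at primes outside `t`. -/
theorem one_lt_prod_one_sub_one_div_pow_mul_tsum {s : ℕ} (hs : 1 < s) {t : Finset ℕ}
    (ht : ∀ p ∈ t, p.Prime) :
    1 < (∏ p ∈ t, (1 - 1 / (p : ℝ) ^ s)) * ∑' k : ℕ, 1 / ((k : ℝ) + 1) ^ s := by
  set f := Nat.oneDivPowHom s
  have hf := Nat.summable_oneDivPowHom hs
  have hzeta : ∑' k : ℕ, 1 / ((k : ℝ) + 1) ^ s = ∑' m : ℕ, f m := by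
    have hs0 : s ≠ 0 := by omega
    rw [hf.tsum_eq_zero_add]
    simp [Nat.oneDivPowHom_apply, hs0]
  have heuler : (∏ p ∈ t, (1 - 1 / (p : ℝ) ^ s))⁻¹ = ∑' m : Nat.factoredNumbers t, f m := by
    rw [← EulerProduct.prod_filter_prime_geometric_eq_tsum_factoredNumbers hf t,
      filter_true_of_mem ht, prod_inv_distrib]
    rfl
  obtain ⟨r, hr, hrt⟩ := Nat.infinite_setOfPred_prime.exists_notMem_finset t
  have hr_notMem : r ∉ Nat.factoredNumbers t := fun h =>
    hrt ((Nat.mem_factoredNumbers.mp h).2 r (by simp [Nat.primeFactorsList_prime hr]))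
  have hf_nonneg (m : ℕ) : 0 ≤ f m := by rw [Nat.oneDivPowHom_apply]; positivity
  have hpartial : ∑' m : Nat.factoredNumbers t, f m < ∑' m : ℕ, f m := by
    rw [_root_.tsum_subtype]
    refine Summable.tsum_lt_tsum (i := r) (fun m => ?_) ?_ (hf.indicator _) hf
    · exact Set.indicator_le_self' (fun m _ => hf_nonneg m) m
    · rw [Set.indicator_of_notMem hr_notMem, Nat.oneDivPowHom_apply]
      have : (0 : ℝ) < r := by exact_mod_cast hr.pos
      positivity
  rw [hzeta, ← inv_lt_iff_one_lt_mul₀' (prod_one_sub_one_div_pow_pos ht (by omega)), heuler]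
  exact hpartial

lemma geom_sum_div_pow_mul_one_sub_le {x : ℝ} (hx : 1 < x) (e : ℕ) :
    (∑ k ∈ range (e + 1), x ^ k) / x ^ e * (1 - 1 / x ^ 3) ≤ 1 + 1 / x + 1 / x ^ 2 := by
  have hx0 : 0 < x := one_pos.trans hx
  calc (∑ k ∈ range (e + 1), x ^ k) / x ^ e * (1 - 1 / x ^ 3)
      = (x ^ (e + 1) - 1) / x ^ (e + 1) * (1 + 1 / x + 1 / x ^ 2) := by
        rw [geom_sum_eq hx.ne']
        field_simp [sub_ne_zero.mpr hx.ne']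
        ring
    _ ≤ 1 * (1 + 1 / x + 1 / x ^ 2) := by
        gcongr
        exact div_le_one_of_le₀ (by linarith) (by positivity)
    _ = 1 + 1 / x + 1 / x ^ 2 := one_mul _

lemma Nat.prod_primeFactors_geom_sum_div_pow {n : ℕ} (hn : n ≠ 0) :
    ∏ p ∈ n.primeFactors,
        (∑ k ∈ range (n.factorization p + 1), (p : ℝ) ^ k) / (p : ℝ) ^ n.factorization p =
      ((∑ d ∈ n.divisors, d : ℕ) : ℝ) / n := by
  have hprod : ∏ p ∈ n.primeFactors, (p : ℝ) ^ n.factorization p = n := by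
    exact_mod_cast Nat.prod_factorization_pow_eq_self hn
  rw [prod_div_distrib, Nat.sum_divisors hn, hprod]
  push_cast
  rfl

lemma Nat.Perfect.prod_primeFactors_geom_sum_div_pow {n : ℕ} (hn : n.Perfect) :
    ∏ p ∈ n.primeFactors,
        (∑ k ∈ range (n.factorization p + 1), (p : ℝ) ^ k) / (p : ℝ) ^ n.factorization p = 2 := by
  have hn0 : (n : ℝ) ≠ 0 := by exact_mod_cast hn.2.ne'
  rw [Nat.prod_primeFactors_geom_sum_div_pow hn.2.ne',
    (Nat.perfect_iff_sum_divisors_eq_two_mul hn.2).mp hn]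
  push_cast
  field_simp

lemma Nat.Perfect.two_mul_prod_erase_le {n q : ℕ} (hn : n.Perfect) (hq : n.factorization q = 1) :
    2 * ∏ p ∈ n.primeFactors.erase q, (1 - 1 / (p : ℝ) ^ 3) ≤
      (1 + 1 / (q : ℝ)) * ∏ p ∈ n.primeFactors.erase q, (1 + 1 / (p : ℝ) + 1 / (p : ℝ) ^ 2) := by
  have hqs : q ∈ n.primeFactors := by simp [← Nat.support_factorization, hq]
  have hq_factor : (∑ k ∈ range (1 + 1), (q : ℝ) ^ k) / (q : ℝ) ^ 1 = 1 + 1 / (q : ℝ) := by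
    have hq0 : (q : ℝ) ≠ 0 := (one_pos.trans (one_lt_cast_of_mem_primeFactors hqs)).ne'
    simp only [sum_range_succ, sum_range_zero]
    field_simp
    ring
  rw [← hn.prod_primeFactors_geom_sum_div_pow, ← mul_prod_erase _ _ hqs, hq, hq_factor,
    mul_assoc, ← prod_mul_distrib]
  refine mul_le_mul_of_nonneg_left (prod_le_prod (fun p hp => ?_) (fun p hp => ?_)) (by positivity)
  all_goals have hp := one_lt_cast_of_mem_primeFactors (mem_of_mem_erase hp)
  · exact mul_nonneg (by positivity) (one_sub_one_div_pow_pos hp three_ne_zero).le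
  · exact geom_sum_div_pow_mul_one_sub_le hp _

lemma Odd.one_lt_prod_primeFactors_mul_tsum {n : ℕ} (hn : Odd n) :
    1 < 7 / 8 * (∏ p ∈ n.primeFactors, (1 - 1 / (p : ℝ) ^ 3)) *
      ∑' k : ℕ, 1 / ((k : ℝ) + 1) ^ 3 := by
  have h2 : 2 ∉ n.primeFactors := fun h =>
    Nat.not_even_iff_odd.mpr hn (even_iff_two_dvd.mpr (Nat.dvd_of_mem_primeFactors h))
  have := one_lt_prod_one_sub_one_div_pow_mul_tsum (s := 3) (by norm_num)
    (t := insert 2 n.primeFactors) fun p hp => by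
      rcases mem_insert.mp hp with rfl | hp
      exacts [Nat.prime_two, Nat.prime_of_mem_primeFactors hp]
  rwa [prod_insert h2, show (1 : ℝ) - 1 / ((2 : ℕ) : ℝ) ^ 3 = 7 / 8 by norm_num] at this

theorem opn_case_one_lower_bound_general (n q : ℕ) (hn : Nat.Perfect n) (hodd : Odd n)
    (hq1 : n.factorization q = 1) :
    16 * (q : ℝ) ^ 3 /
        (7 * (∑' k : ℕ, (1 : ℝ) / ((k : ℝ) + 1) ^ 3) * ((q : ℝ) ^ 3 - 1)) <
      (1 + 1 / (q : ℝ)) *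
        ∏ p ∈ n.primeFactors.erase q, (1 + 1 / (p : ℝ) + 1 / (p : ℝ) ^ 2) := by
  set Z := ∑' k : ℕ, (1 : ℝ) / ((k : ℝ) + 1) ^ 3
  set E := ∏ p ∈ n.primeFactors.erase q, (1 - 1 / (p : ℝ) ^ 3)
  have hqs : q ∈ n.primeFactors := by simp [← Nat.support_factorization, hq1]
  have hq := one_lt_cast_of_mem_primeFactors hqs
  have hsieve : 1 < 7 / 8 * ((1 - 1 / (q : ℝ) ^ 3) * E) * Z := by
    simpa only [← mul_prod_erase _ _ hqs] using hodd.one_lt_prod_primeFactors_mul_tsum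
  have hE : 0 < E := prod_one_sub_one_div_pow_pos
    (fun p hp => Nat.prime_of_mem_primeFactors (mem_of_mem_erase hp)) three_ne_zero
  have hZ : 0 < Z := pos_of_mul_pos_right (one_pos.trans hsieve)
    (mul_pos (by norm_num) (mul_pos (one_sub_one_div_pow_pos hq three_ne_zero) hE)).le
  have hq3 : (1 - 1 / (q : ℝ) ^ 3) * q ^ 3 = q ^ 3 - 1 := by field_simp
  have hq3_pos : (0 : ℝ) < q ^ 3 - 1 := sub_pos.mpr (one_lt_pow₀ hq three_ne_zero)
  calc 16 * (q : ℝ) ^ 3 / (7 * Z * ((q : ℝ) ^ 3 - 1)) < 2 * E := by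
        rw [div_lt_iff₀ (by positivity)]
        -- `16 q³ · hsieve` reads `16 q³ < 14 (q³ - 1) E Z`, by `hq3`.
        nlinarith [mul_lt_mul_of_pos_left hsieve (by positivity : (0 : ℝ) < 16 * q ^ 3)]
    _ ≤ _ := hn.two_mul_prod_erase_le hq1

/-- If `n` is an odd perfect number, `q` a prime dividing `n` with `h_q = 1`, and
`h_p ≥ 2` for every other prime `p ∣ n`, then
`16·q³/(7·ζ(3)·(q³ − 1)) < (1 + 1/q) · ∏_{p ∣ n, p ≠ q} (1 + 1/p + 1/p²)`,
where `ζ(3) = ∑_{k ≥ 1} 1/k³`. -/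
theorem opn_case_one_lower_bound (n q : ℕ) (hn : Nat.Perfect n) (hodd : Odd n)
    (hq : q.Prime) (hqn : q ∣ n) (hq1 : n.factorization q = 1)
    (h2 : ∀ p ∈ n.primeFactors, p ≠ q → 2 ≤ n.factorization p) :
    16 * (q : ℝ) ^ 3 /
        (7 * (∑' k : ℕ, (1 : ℝ) / ((k : ℝ) + 1) ^ 3) * ((q : ℝ) ^ 3 - 1)) <
      (1 + 1 / (q : ℝ)) *
        ∏ p ∈ n.primeFactors.erase q, (1 + 1 / (p : ℝ) + 1 / (p : ℝ) ^ 2) :=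
  opn_case_one_lower_bound_general n q hn hodd hq1
end

section
/- Let n be an odd perfect number, let q be a prime dividing n with h_q = 1, and suppose h_p ≥ 2 for every other prime p dividing n, where h_p is the exponent of p in the prime factorisation of n. Then 16/(7·ζ(3)) < (1 + 1/q) · ∏_{p | n, p ≠ q} (1 + 1/p + 1/p²), where the product runs over the distinct prime factors p of n other than q. -/
/-!
Write `n = q * m` with `q ∤ m`. The function `σ_k(m) / m ^ k` is multiplicative, so perfection
gives `2 = σ(n) / n = (1 + 1/q) · σ(m) / m`. Prime by prime,
`σ(p^h) / p^h ≤ (1 + 1/p + 1/p²) · σ₃(p^h) / p^{3h}`, because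
`(1 + x + x²)(1 + x³ + ⋯ + x^{3h}) = 1 + x + ⋯ + x^{3h+2}` with `x = 1/p`. Finally, as `m` is odd,
`σ₃(m) / m³ = ∑_{d ∣ m} d⁻³` is a proper finite subsum of `∑_{k odd} k⁻³ = (7/8) ζ(3)`.
-/

open Finset ArithmeticFunction
open scoped ArithmeticFunction.sigma

theorem mul_geom_sum_pow_three {R : Type*} [CommSemiring R] (x : R) (N : ℕ) :
    (1 + x + x ^ 2) * ∑ i ∈ range N, (x ^ 3) ^ i = ∑ i ∈ range (3 * N), x ^ i := by
  induction N with
  | zero => simp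
  | succ N ih =>
    rw [sum_range_succ, mul_add, ih, show 3 * (N + 1) = 3 * N + 1 + 1 + 1 by ring,
      sum_range_succ, sum_range_succ, sum_range_succ]
    ring

theorem geom_sum_le_mul_geom_sum_pow_three {R : Type*} [CommSemiring R] [PartialOrder R]
    [IsOrderedRing R] {x : R} (hx : 0 ≤ x) (N : ℕ) :
    ∑ i ∈ range N, x ^ i ≤ (1 + x + x ^ 2) * ∑ i ∈ range N, (x ^ 3) ^ i := by
  rw [mul_geom_sum_pow_three]
  exact sum_le_sum_of_subset_of_nonneg (range_mono (by omega)) fun i _ _ => pow_nonneg hx i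

noncomputable def sigmaDivPow (k : ℕ) : ArithmeticFunction ℝ := pdiv (σ k) (pow k)

theorem sigmaDivPow_apply (k n : ℕ) : sigmaDivPow k n = (σ k n : ℝ) / (n : ℝ) ^ k := by
  by_cases h : k = 0 ∧ n = 0
  · simp [sigmaDivPow, h]
  · simp [sigmaDivPow, pdiv_apply, pow_apply, h]

theorem isMultiplicative_sigmaDivPow (k : ℕ) : IsMultiplicative (sigmaDivPow k) :=
  isMultiplicative_sigma.natCast.pdiv isMultiplicative_pow.natCast

theorem sigmaDivPow_eq_sum_divisors (k n : ℕ) :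
    sigmaDivPow k n = ∑ d ∈ n.divisors, 1 / (d : ℝ) ^ k := by
  rw [sigmaDivPow_apply, sigma_apply, ← Nat.sum_div_divisors n fun d => 1 / (d : ℝ) ^ k]
  push_cast
  rw [sum_div]
  refine sum_congr rfl fun d hd => ?_
  have hd0 : (d : ℝ) ≠ 0 := by exact_mod_cast (Nat.pos_of_mem_divisors hd).ne'
  rw [Nat.cast_div (Nat.dvd_of_mem_divisors hd) hd0, div_pow, one_div_div]

theorem sigmaDivPow_prime_pow {p : ℕ} (hp : p.Prime) (k h : ℕ) :
    sigmaDivPow k (p ^ h) = ∑ i ∈ range (h + 1), ((1 / (p : ℝ)) ^ k) ^ i := by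
  rw [sigmaDivPow_eq_sum_divisors, Nat.sum_divisors_prime_pow hp]
  refine sum_congr rfl fun i _ => ?_
  push_cast
  ring

theorem sigmaDivPow_eq_prod {k n : ℕ} (hn : n ≠ 0) :
    sigmaDivPow k n =
      ∏ p ∈ n.primeFactors, ∑ i ∈ range (n.factorization p + 1), ((1 / (p : ℝ)) ^ k) ^ i := by
  rw [(isMultiplicative_sigmaDivPow k).multiplicative_factorization _ hn, Finsupp.prod,
    Nat.support_factorization]
  exact prod_congr rfl fun p hp => sigmaDivPow_prime_pow (Nat.prime_of_mem_primeFactors hp) k _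

theorem sigmaDivPow_one_le_prod_mul_sigmaDivPow_three {n : ℕ} (hn : n ≠ 0) :
    sigmaDivPow 1 n ≤
      (∏ p ∈ n.primeFactors, (1 + 1 / (p : ℝ) + 1 / (p : ℝ) ^ 2)) * sigmaDivPow 3 n := by
  rw [sigmaDivPow_eq_prod hn, sigmaDivPow_eq_prod hn, ← prod_mul_distrib]
  refine prod_le_prod (fun p _ => by positivity) fun p _ => ?_
  simpa only [pow_one, one_div_pow] using
    geom_sum_le_mul_geom_sum_pow_three (x := 1 / (p : ℝ)) (by positivity) _

theorem sigmaDivPow_prime {p : ℕ} (hp : p.Prime) (k : ℕ) :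
    sigmaDivPow k p = 1 + 1 / (p : ℝ) ^ k := by
  simpa [sum_range_succ] using sigmaDivPow_prime_pow hp k 1

theorem Nat.Perfect.sigmaDivPow_one {n : ℕ} (h : n.Perfect) : sigmaDivPow 1 n = 2 := by
  have hn : (n : ℝ) ≠ 0 := by exact_mod_cast h.2.ne'
  rw [sigmaDivPow_apply, sigma_one_apply, (Nat.perfect_iff_sum_divisors_eq_two_mul h.2).1 h]
  push_cast
  field_simp

theorem summable_one_div_odd_pow {s : ℕ} (hs : 1 < s) :
    Summable fun k : ℕ => 1 / ((2 * k + 1 : ℕ) : ℝ) ^ s :=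
  (Real.summable_one_div_nat_pow.mpr hs).comp_injective fun a b h => by simpa using h

theorem tsum_one_div_odd_pow {s : ℕ} (hs : 1 < s) :
    ∑' k : ℕ, 1 / ((2 * k + 1 : ℕ) : ℝ) ^ s =
      (1 - 1 / 2 ^ s) * ∑' k : ℕ, 1 / ((k : ℝ) + 1) ^ s := by
  have hsum := Real.summable_one_div_nat_pow.mpr hs
  have heven :
      ∑' k : ℕ, 1 / ((2 * k : ℕ) : ℝ) ^ s = 1 / 2 ^ s * ∑' m : ℕ, 1 / (m : ℝ) ^ s := by
    rw [← tsum_mul_left]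
    exact tsum_congr fun k => by push_cast; ring
  have hsplit := tsum_even_add_odd (f := fun m : ℕ => 1 / (m : ℝ) ^ s)
    (hsum.comp_injective fun a b h => by simpa using h) (summable_one_div_odd_pow hs)
  have hshift : ∑' m : ℕ, 1 / (m : ℝ) ^ s = ∑' k : ℕ, 1 / ((k : ℝ) + 1) ^ s := by
    have hs0 : s ≠ 0 := by omega
    rw [hsum.tsum_eq_zero_add]
    simp [hs0]
  rw [← hshift]
  linarith

theorem sum_divisors_one_div_pow_lt_of_odd {m s : ℕ} (hm : Odd m) (hs : 1 < s) :
    ∑ d ∈ m.divisors, 1 / (d : ℝ) ^ s < ∑' k : ℕ, 1 / ((2 * k + 1 : ℕ) : ℝ) ^ s := by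
  have hodd : ∀ d ∈ m.divisors, 2 * (d / 2) + 1 = d := fun d hd =>
    Nat.two_mul_div_two_add_one_of_odd (hm.of_dvd_nat (Nat.dvd_of_mem_divisors hd))
  set T := m.divisors.image (· / 2)
  have hsum :
      ∑ d ∈ m.divisors, 1 / (d : ℝ) ^ s = ∑ k ∈ T, 1 / ((2 * k + 1 : ℕ) : ℝ) ^ s := by
    rw [sum_image fun a ha b hb hab => by rw [← hodd a ha, ← hodd b hb, hab]]
    exact sum_congr rfl fun d hd => by rw [hodd d hd]
  obtain ⟨k₀, hk₀⟩ := Infinite.exists_notMem_finset T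
  calc ∑ d ∈ m.divisors, 1 / (d : ℝ) ^ s
      < ∑ k ∈ insert k₀ T, 1 / ((2 * k + 1 : ℕ) : ℝ) ^ s := by
        rw [hsum, sum_insert hk₀, lt_add_iff_pos_left]
        positivity
    _ ≤ _ := (summable_one_div_odd_pow hs).sum_le_tsum _ fun _ _ => by positivity

theorem Nat.primeFactors_ordCompl (n p : ℕ) :
    (ordCompl[p] n).primeFactors = n.primeFactors.erase p := by
  rw [← Nat.support_factorization, ← Nat.support_factorization, Nat.factorization_ordCompl,
    Finsupp.support_erase]

theorem sigmaDivPow_lt_of_odd {m s : ℕ} (hm : Odd m) (hs : 1 < s) :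
    sigmaDivPow s m < (1 - 1 / 2 ^ s) * ∑' k : ℕ, 1 / ((k : ℝ) + 1) ^ s := by
  rw [sigmaDivPow_eq_sum_divisors, ← tsum_one_div_odd_pow hs]
  exact sum_divisors_one_div_pow_lt_of_odd hm hs

theorem opn_case_one_weaker_lower_bound_general (n q : ℕ) (hn : Nat.Perfect n) (hodd : Odd n)
    (hq : q.Prime) (hq1 : n.factorization q = 1) :
    16 / (7 * ∑' k : ℕ, (1 : ℝ) / ((k : ℝ) + 1) ^ 3) <
      (1 + 1 / (q : ℝ)) *
        ∏ p ∈ n.primeFactors.erase q, (1 + 1 / (p : ℝ) + 1 / (p : ℝ) ^ 2) := by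
  have hn0 : n ≠ 0 := hn.2.ne'
  set m := ordCompl[q] n
  have hnm : q ^ n.factorization q * m = n := Nat.ordProj_mul_ordCompl_eq_self n q
  rw [hq1, pow_one] at hnm
  have habund : (1 + 1 / (q : ℝ)) * sigmaDivPow 1 m = 2 := by
    rw [← pow_one (q : ℝ), ← sigmaDivPow_prime hq,
      ← (isMultiplicative_sigmaDivPow 1).map_mul_of_coprime (Nat.coprime_ordCompl hq hn0), hnm,
      hn.sigmaDivPow_one]
  have hsigma := sigmaDivPow_one_le_prod_mul_sigmaDivPow_three (Nat.ordCompl_pos q hn0).ne'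
  have hcube : sigmaDivPow 3 m < 7 / 8 * ∑' k : ℕ, (1 : ℝ) / ((k : ℝ) + 1) ^ 3 := by
    convert sigmaDivPow_lt_of_odd (hodd.of_dvd_nat (Nat.ordCompl_dvd n q)) (by norm_num : 1 < 3)
    norm_num
  rw [← Nat.primeFactors_ordCompl]
  set ζ := ∑' k : ℕ, (1 : ℝ) / ((k : ℝ) + 1) ^ 3
  set P := ∏ p ∈ m.primeFactors, (1 + 1 / (p : ℝ) + 1 / (p : ℝ) ^ 2)
  have hζ : 0 < ζ := by linarith [(by rw [sigmaDivPow_apply]; positivity : 0 ≤ sigmaDivPow 3 m)]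
  rw [div_lt_iff₀ (by positivity)]
  calc (16 : ℝ) = 8 * ((1 + 1 / (q : ℝ)) * sigmaDivPow 1 m) := by rw [habund]; norm_num
    _ ≤ 8 * ((1 + 1 / (q : ℝ)) * (P * sigmaDivPow 3 m)) := by gcongr
    _ < 8 * ((1 + 1 / (q : ℝ)) * (P * (7 / 8 * ζ))) := by gcongr
    _ = (1 + 1 / (q : ℝ)) * P * (7 * ζ) := by ring

/-- If `n` is an odd perfect number, `q` a prime dividing `n` with `h_q = 1`, and
`h_p ≥ 2` for every other prime `p ∣ n`, then
`16/(7·ζ(3)) < (1 + 1/q) · ∏_{p ∣ n, p ≠ q} (1 + 1/p + 1/p²)`,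
where `ζ(3) = ∑_{k ≥ 1} 1/k³`. -/
theorem opn_case_one_weaker_lower_bound (n q : ℕ) (hn : Nat.Perfect n) (hodd : Odd n)
    (hq : q.Prime) (hqn : q ∣ n) (hq1 : n.factorization q = 1)
    (h2 : ∀ p ∈ n.primeFactors, p ≠ q → 2 ≤ n.factorization p) :
    16 / (7 * ∑' k : ℕ, (1 : ℝ) / ((k : ℝ) + 1) ^ 3) <
      (1 + 1 / (q : ℝ)) *
        ∏ p ∈ n.primeFactors.erase q, (1 + 1 / (p : ℝ) + 1 / (p : ℝ) ^ 2) :=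
  opn_case_one_weaker_lower_bound_general n q hn hodd hq hq1
end

section
/- If n is an odd perfect number, then it is not the case that 3, 5 and 7 all divide n; equivalently, 105 does not divide n. -/
/-!
If `p ≡ 3 (mod 4)` occurs in `n` to an odd power `a`, then `σ(p^a) = 1 + p + ⋯ + p^a` has an even
number of terms, so `1 + p` divides it and `4 ∣ σ(n)`; for odd perfect `n` this contradicts
`σ(n) = 2n`. Hence `3 ∣ n` and `7 ∣ n` force `9 ∣ n` and `49 ∣ n`, so `3² · 5 · 7² = 2205 ∣ n`.
But `2205` is abundant, and multiples of abundant numbers are abundant.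
-/

open ArithmeticFunction Finset
open scoped ArithmeticFunction.sigma

theorem one_add_dvd_sum_range_two_mul_pow {R : Type*} [CommSemiring R] (x : R) (k : ℕ) :
    1 + x ∣ ∑ i ∈ range (2 * k), x ^ i := by
  induction k with
  | zero => simp
  | succ k ih =>
    rw [show 2 * (k + 1) = 2 * k + 1 + 1 by ring, sum_range_succ, sum_range_succ, add_assoc,
      show x ^ (2 * k) + x ^ (2 * k + 1) = x ^ (2 * k) * (1 + x) by ring]
    exact dvd_add ih (dvd_mul_left _ _)

theorem four_dvd_sigma_one_prime_pow {p a : ℕ} (hp : p.Prime) (hp4 : p % 4 = 3) (ha : Odd a) :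
    4 ∣ σ 1 (p ^ a) := by
  obtain ⟨k, rfl⟩ := ha
  rw [sigma_one_apply_prime_pow hp, show 2 * k + 1 + 1 = 2 * (k + 1) by ring]
  exact (show 4 ∣ 1 + p by omega).trans (one_add_dvd_sum_range_two_mul_pow p (k + 1))

theorem Nat.Perfect.sigma_one_eq_two_mul {n : ℕ} (hn : n.Perfect) : σ 1 n = 2 * n := by
  rw [sigma_one_apply]
  exact (Nat.perfect_iff_sum_divisors_eq_two_mul hn.2).mp hn

theorem Nat.Perfect.even_factorization_of_mod_four_eq_three {n p : ℕ} (hn : n.Perfect)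
    (hodd : Odd n) (hp : p.Prime) (hp4 : p % 4 = 3) : Even (n.factorization p) := by
  by_contra hexp
  have hσ : σ 1 n = σ 1 (p ^ n.factorization p) * σ 1 (n / p ^ n.factorization p) := by
    conv_lhs => rw [← Nat.ordProj_mul_ordCompl_eq_self n p]
    exact isMultiplicative_sigma.map_mul_of_coprime
      ((Nat.coprime_ordCompl hp hn.2.ne').pow_left _)
  have h4 : 4 ∣ 2 * n := by
    rw [← hn.sigma_one_eq_two_mul, hσ]
    exact (four_dvd_sigma_one_prime_pow hp hp4 (Nat.not_even_iff_odd.mp hexp)).mul_right _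
  obtain ⟨m, rfl⟩ := hodd
  omega

theorem Nat.Perfect.sq_dvd_of_mod_four_eq_three {n p : ℕ} (hn : n.Perfect) (hodd : Odd n)
    (hp : p.Prime) (hp4 : p % 4 = 3) (hpn : p ∣ n) : p ^ 2 ∣ n := by
  have hpos : 0 < n.factorization p := hp.factorization_pos_of_dvd hn.2.ne' hpn
  obtain ⟨k, hk⟩ := hn.even_factorization_of_mod_four_eq_three hodd hp hp4
  exact (hp.pow_dvd_iff_le_factorization hn.2.ne').mpr (by omega)

theorem Nat.abundant_2205 : Nat.Abundant 2205 := by decide +kernel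

theorem Nat.Perfect.not_abundant {n : ℕ} (hn : n.Perfect) : ¬n.Abundant :=
  ((Nat.perfect_iff_not_abundant_and_not_deficient hn.2.ne).mp hn).1

/-- An odd perfect number is not divisible by all three of 3, 5 and 7; equivalently,
`105` does not divide it. -/
theorem opn_not_div_105 (n : ℕ) (hn : Nat.Perfect n) (hodd : Odd n) :
    ¬(3 ∣ n ∧ 5 ∣ n ∧ 7 ∣ n) := by
  rintro ⟨h3, h5, h7⟩
  have h9 : 3 ^ 2 ∣ n := hn.sq_dvd_of_mod_four_eq_three hodd Nat.prime_three rfl h3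
  have h49 : 7 ^ 2 ∣ n := hn.sq_dvd_of_mod_four_eq_three hodd (by norm_num) rfl h7
  have h2205 : 3 ^ 2 * 5 * 7 ^ 2 ∣ n :=
    Nat.Coprime.mul_dvd_of_dvd_of_dvd (by norm_num)
      (Nat.Coprime.mul_dvd_of_dvd_of_dvd (by norm_num) h9 h5) h49
  exact hn.not_abundant (Nat.abundant_2205.of_dvd h2205 hn.2.ne')
end

section
/- Let n be an odd perfect number with exactly m distinct prime factors, and suppose the smallest prime factor of n is the r-th prime p_r (where p_1 = 2, p_2 = 3, p_3 = 5, ...). Then ∏_{j=r}^{r+m-1} (1 + 1/p_j) > 16/π². -/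
/-!
For a perfect number `n`, `2 = σ(n)/n = ∏_{p ∣ n} σ(p^a)/p^a < ∏_{p ∣ n} (1 - 1/p)⁻¹`, and
`(1 - 1/p)⁻¹ = (1 + 1/p) (1 - 1/p²)⁻¹`. By the Euler product for `ζ(2) = π²/6`, the product
of `(1 - 1/p²)⁻¹` over any finite set of odd primes is at most `(3/4) π²/6 = π²/8`, so
`∏_{p ∣ n} (1 + 1/p) > 16/π²` when `n` is odd. Finally, counting from `0`, the `i`-th
smallest prime factor of `n` is at least `p_{r+i}`, so replacing the prime factors by the
consecutive primes from `p_r` on can only increase the product.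
-/

open Real Finset

theorem prod_inv_one_sub_inv_sq_le_pi_sq_div_six {S : Finset ℕ} (hS : ∀ p ∈ S, p.Prime) :
    ∏ p ∈ S, (1 - ((p : ℝ) ^ 2)⁻¹)⁻¹ ≤ π ^ 2 / 6 := by
  let f : ℕ →* ℝ := invMonoidHom.comp ((powMonoidHom 2).comp (Nat.castRingHom ℝ : ℕ →* ℝ))
  have hf : ⇑f = fun n : ℕ => ((n : ℝ) ^ 2)⁻¹ := rfl
  have hsum : Summable f := by
    rw [hf]
    simp
  have euler := EulerProduct.prod_filter_prime_geometric_eq_tsum_factoredNumbers hsum S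
  rw [filter_true_of_mem hS] at euler
  calc ∏ p ∈ S, (1 - ((p : ℝ) ^ 2)⁻¹)⁻¹ = ∑' m : Nat.factoredNumbers S, f m := euler
    _ ≤ ∑' m : ℕ, f m := hsum.tsum_subtype_le _ _ fun _ => by rw [hf]; positivity
    _ = π ^ 2 / 6 := by simpa [hf, one_div] using hasSum_zeta_two.tsum_eq

theorem prod_inv_one_sub_inv_sq_le_pi_sq_div_eight {S : Finset ℕ} (hS : ∀ p ∈ S, p.Prime)
    (h2 : 2 ∉ S) : ∏ p ∈ S, (1 - ((p : ℝ) ^ 2)⁻¹)⁻¹ ≤ π ^ 2 / 8 := by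
  have h := prod_inv_one_sub_inv_sq_le_pi_sq_div_six (S := insert 2 S)
    ((forall_mem_insert _ _ _).mpr ⟨Nat.prime_two, hS⟩)
  rw [prod_insert h2, show (1 - (((2 : ℕ) : ℝ) ^ 2)⁻¹)⁻¹ = (4 / 3 : ℝ) by norm_num] at h
  linarith

theorem geom_sum_div_pow_lt_inv_one_sub_inv {x : ℝ} (hx : 1 < x) (a : ℕ) :
    (∑ k ∈ range (a + 1), x ^ k) / x ^ a < (1 - x⁻¹)⁻¹ := by
  have hx0 : 0 < x := by linarith
  rw [show (1 - x⁻¹)⁻¹ = x / (x - 1) by field_simp, div_lt_div_iff₀ (by positivity) (by linarith),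
    geom_sum_mul, ← pow_succ']
  linarith

theorem inv_one_sub_inv_eq_one_add_inv_mul {K : Type*} [Field K] {x : K} (hx : 1 + x⁻¹ ≠ 0) :
    (1 - x⁻¹)⁻¹ = (1 + x⁻¹) * (1 - (x ^ 2)⁻¹)⁻¹ := by
  rw [show 1 - (x ^ 2)⁻¹ = (1 - x⁻¹) * (1 + x⁻¹) by ring, mul_inv, mul_left_comm,
    mul_inv_cancel₀ hx, mul_one]

theorem Nat.Perfect.two_lt_prod_inv_one_sub_inv {n : ℕ} (hn : n.Perfect) :
    2 < ∏ p ∈ n.primeFactors, (1 - (p : ℝ)⁻¹)⁻¹ := by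
  have hn0 : n ≠ 0 := hn.2.ne'
  have hn1 : n ≠ 1 := by rintro rfl; simp [Nat.Perfect] at hn
  have hσ : ∑ d ∈ n.divisors, d = 2 * n := (perfect_iff_sum_divisors_eq_two_mul hn.2).mp hn
  have two_eq : (2 : ℝ) = ∏ p ∈ n.primeFactors,
      (∑ k ∈ range (n.factorization p + 1), (p : ℝ) ^ k) / (p : ℝ) ^ n.factorization p := by
    have hσ' : ∏ p ∈ n.primeFactors, ∑ k ∈ range (n.factorization p + 1), (p : ℝ) ^ k = 2 * n := by
      exact_mod_cast (sum_divisors hn0).symm.trans hσ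
    have hn' : ∏ p ∈ n.primeFactors, (p : ℝ) ^ n.factorization p = n := by
      exact_mod_cast (prod_primeFactors_pow_factorization hn0).symm
    rw [prod_div_distrib, hσ', hn', mul_div_cancel_right₀ _ (by exact_mod_cast hn0)]
  rw [two_eq]
  refine prod_lt_prod_of_nonempty (fun p hp => ?_) (fun p hp => ?_)
    (nonempty_primeFactors.mpr (by omega))
  · have := (prime_of_mem_primeFactors hp).pos
    positivity
  · exact geom_sum_div_pow_lt_inv_one_sub_inv (mod_cast (prime_of_mem_primeFactors hp).one_lt) _

theorem Nat.Perfect.sixteen_div_pi_sq_lt_prod_one_add_inv {n : ℕ} (hn : n.Perfect)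
    (hodd : Odd n) : 16 / π ^ 2 < ∏ p ∈ n.primeFactors, (1 + (p : ℝ)⁻¹) := by
  have hS : ∀ p ∈ n.primeFactors, p.Prime := fun p hp => prime_of_mem_primeFactors hp
  have h2 : 2 ∉ n.primeFactors := fun h =>
    not_even_iff_odd.mpr hodd (even_iff_two_dvd.mpr (dvd_of_mem_primeFactors h))
  have two_lt := hn.two_lt_prod_inv_one_sub_inv
  rw [prod_congr rfl fun p hp =>
    inv_one_sub_inv_eq_one_add_inv_mul (by have := (hS p hp).pos; positivity),
    prod_mul_distrib] at two_lt
  have hpos : 0 < ∏ p ∈ n.primeFactors, (1 + (p : ℝ)⁻¹) := prod_pos fun p _ => by positivity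
  have hle := prod_inv_one_sub_inv_sq_le_pi_sq_div_eight hS h2
  rw [div_lt_iff₀ (by positivity)]
  nlinarith

theorem Nat.nth_add_le_of_strictMono {p : ℕ → Prop} {m k : ℕ} {f : Fin m → ℕ}
    (hf : StrictMono f) (hp : ∀ i, p (f i)) (hk : ∀ i, nth p k ≤ f i) (i : Fin m) :
    nth p (k + i) ≤ f i := by
  obtain ⟨i, hi⟩ := i
  induction i with
  | zero => exact hk _
  | succ i ih =>
    have hlt : f ⟨i, by omega⟩ < f ⟨i + 1, hi⟩ := hf (Fin.mk_lt_mk.mpr i.lt_succ_self)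
    by_contra! h
    exact (ih (by omega)).not_gt (hlt.trans_le (le_nth_of_lt_nth_succ h (hp _)))

theorem Finset.prod_le_prod_nth {R : Type*} [CommMonoidWithZero R] [Preorder R]
    [ZeroLEOneClass R] [PosMulMono R] {p : ℕ → Prop} (hp : (Set.ofPred p).Infinite) {S : Finset ℕ}
    (hS : ∀ a ∈ S, p a) {k : ℕ} (hk : ∀ a ∈ S, Nat.nth p k ≤ a) {f : ℕ → R}
    (hf : AntitoneOn f (Set.ofPred p)) (hf0 : ∀ a ∈ S, 0 ≤ f a) :
    ∏ a ∈ S, f a ≤ ∏ i ∈ range #S, f (Nat.nth p (k + i)) := by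
  let e := S.orderEmbOfFin rfl
  have he : ∀ i, e i ∈ S := S.orderEmbOfFin_mem rfl
  have hSe : ∏ a ∈ S, f a = ∏ i, f (e i) := by
    conv_lhs => rw [← S.image_orderEmbOfFin_univ rfl]
    exact prod_image fun i _ j _ h => e.injective h
  rw [hSe, ← Fin.prod_univ_eq_prod_range]
  refine prod_le_prod (fun i _ => hf0 _ (he i)) fun i _ =>
    hf (Nat.nth_mem_of_infinite hp _) (hS _ (he i)) ?_
  exact Nat.nth_add_le_of_strictMono e.strictMono (fun i => hS _ (he i)) (fun i => hk _ (he i)) i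

/-- Let `n` be an odd perfect number with exactly `m` distinct prime factors whose
smallest prime factor is the `r`-th prime (1-indexed, so the 1st prime is 2). Then
`∏_{j=r}^{r+m-1} (1 + 1/p_j) > 16/π²`. -/
theorem opn_consecutive_primes_product_gt (n m r : ℕ) (hn : Nat.Perfect n) (hodd : Odd n)
    (hm : n.primeFactors.card = m) (hr : 1 ≤ r)
    (hmin : n.minFac = Nat.nth Nat.Prime (r - 1)) :
    ∏ j ∈ Finset.Icc r (r + m - 1), (1 + 1 / (Nat.nth Nat.Prime (j - 1) : ℝ)) >
      16 / Real.pi ^ 2 := by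
  have hmin_le : ∀ p ∈ n.primeFactors, Nat.nth Nat.Prime (r - 1) ≤ p := fun p hp =>
    hmin ▸ Nat.minFac_le_of_dvd (Nat.prime_of_mem_primeFactors hp).two_le
      (Nat.dvd_of_mem_primeFactors hp)
  have hanti : AntitoneOn (fun p : ℕ => 1 + (p : ℝ)⁻¹) (Set.ofPred Nat.Prime) :=
    fun a ha b _ hab => by
    have := ha.pos
    dsimp only
    gcongr
  have hcompare := prod_le_prod_nth Nat.infinite_setOfPred_prime
    (fun p hp => Nat.prime_of_mem_primeFactors hp) hmin_le hanti (fun p _ => by positivity)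
  have hreindex : ∏ j ∈ Icc r (r + m - 1), (1 + 1 / (Nat.nth Nat.Prime (j - 1) : ℝ)) =
      ∏ i ∈ range m, (1 + (Nat.nth Nat.Prime (r - 1 + i) : ℝ)⁻¹) := by
    rw [← Ico_add_one_right_eq_Icc, prod_Ico_eq_prod_range, show r + m - 1 + 1 - r = m by omega]
    refine prod_congr rfl fun i _ => ?_
    rw [one_div, show r + i - 1 = r - 1 + i by omega]
  rw [gt_iff_lt, hreindex, ← hm]
  exact hn.sixteen_div_pi_sq_lt_prod_one_add_inv hodd |>.trans_le hcompare
end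

section
/- Let n be an odd perfect number with exactly m ≥ 2 distinct prime factors, and suppose the second smallest prime factor of n is the r-th prime p_r (where p_1 = 2, p_2 = 3, p_3 = 5, ...). Then (1 + 1/3) · ∏_{j=r}^{r+m-2} (1 + 1/p_j) > 16/π². -/
/-!
For perfect `n`, `2 = σ(n)/n < ∏_{p ∣ n} p/(p-1) = ∏_{p ∣ n} (1 + 1/p) · ∏_{p ∣ n} (1 - p⁻²)⁻¹`.
The Euler product of `ζ(2) = π²/6` contains the factor `4/3` at `p = 2`, so for odd `n` the last
product is at most `π²/8`, whence `∏_{p ∣ n} (1 + 1/p) > 16/π²`. The smallest prime factor of odd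
`n` is at least `3`, and if the second smallest is `p_r`, the remaining ones are distinct primes
`≥ p_r`, so the `k`-th smallest is at least `p_{r+k-2}`; as `1 + 1/p` decreases in `p`, this
bounds the product by `(1 + 1/3) ∏_{j=r}^{r+m-2} (1 + 1/p_j)`.
-/

open Finset Real

lemma geom_sum_lt_pow_div_sub_one {K : Type*} [Field K] [LinearOrder K] [IsStrictOrderedRing K]
    {x : K} (hx : 1 < x) (k : ℕ) : ∑ i ∈ range k, x ^ i < x ^ k / (x - 1) := by
  rw [geom_sum_eq hx.ne', div_lt_div_iff_of_pos_right (sub_pos.2 hx)]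
  linarith

lemma prod_le_prod_Ico_of_antitone {R : Type*} [CommSemiring R] [PartialOrder R] [IsOrderedRing R]
    {f : ℕ → R} (hf : Antitone f) (hf₀ : ∀ n, 0 ≤ f n) {s : Finset ℕ} {a : ℕ}
    (hs : ∀ x ∈ s, a ≤ x) : ∏ x ∈ s, f x ≤ ∏ x ∈ Ico a (a + #s), f x := by
  induction s using Finset.induction_on_max with
  | empty => simp
  | insert x s hlt ih =>
    have hxs : x ∉ s := fun hx => lt_irrefl x (hlt x hx)
    have hs' : s ⊆ Ico a x := fun y hy => mem_Ico.2 ⟨hs y (mem_insert_of_mem hy), hlt y hy⟩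
    have hx : a + #s ≤ x := by
      have := card_le_card hs'
      have := hs x (mem_insert_self x s)
      simp only [Nat.card_Ico] at *
      omega
    rw [prod_insert hxs, card_insert_of_notMem hxs, ← add_assoc, prod_Ico_succ_top (by omega),
      mul_comm]
    exact mul_le_mul (ih fun y hy => hs y (mem_insert_of_mem hy)) (hf hx) (hf₀ x)
      (prod_nonneg fun _ _ => hf₀ _)

lemma Finset.sort_getElem!_one_le {α : Type*} [LinearOrder α] [Inhabited α] {s : Finset α}
    (hs : s.Nonempty) {x : α} (hx : x ∈ s.erase (s.min' hs)) : (s.sort (· ≤ ·))[1]! ≤ x := by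
  have hne : (s.erase (s.min' hs)).Nonempty := ⟨x, hx⟩
  rw [← insert_erase (s.min'_mem hs), sort_insert _ (fun b hb => s.min'_le b (mem_of_mem_erase hb))
    (notMem_erase _ _)]
  have hlen : 0 < ((s.erase (s.min' hs)).sort (· ≤ ·)).length := by
    rw [length_sort]; exact hne.card_pos
  rw [List.getElem!_cons_succ, getElem!_pos _ 0 hlen, sorted_zero_eq_min']
  exact min'_le _ x hx

lemma div_sub_one_eq_one_add_one_div_mul {K : Type*} [Field K] {x : K} (hx₀ : x ≠ 0)
    (hx₁ : x ^ 2 ≠ 1) : x / (x - 1) = (1 + 1 / x) * (1 - (x ^ 2)⁻¹)⁻¹ := by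
  have hx : x - 1 ≠ 0 := fun h => hx₁ (by rw [sub_eq_zero.1 h, one_pow])
  have hx2 : x ^ 2 - 1 ≠ 0 := sub_ne_zero.2 hx₁
  field_simp
  ring

lemma antitoneOn_one_add_one_div_natCast :
    AntitoneOn (fun k : ℕ => 1 + 1 / (k : ℝ)) (Set.Ioi 0) := fun j hj k _ hjk => by
  have : (0 : ℝ) < j := by exact_mod_cast hj
  dsimp only
  gcongr

lemma sum_divisors_lt_mul_prod_primeFactors {n : ℕ} (hn : 1 < n) :
    (∑ d ∈ n.divisors, d : ℝ) < n * ∏ p ∈ n.primeFactors, (p : ℝ) / (p - 1) := by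
  have hn₀ : n ≠ 0 := by omega
  have hne : n.primeFactors.Nonempty := Nat.nonempty_primeFactors.2 hn
  have hn_eq : (n : ℝ) = ∏ p ∈ n.primeFactors, (p : ℝ) ^ n.factorization p := by
    exact_mod_cast Nat.prod_primeFactors_pow_factorization hn₀
  rw [hn_eq, ← prod_mul_distrib, ← Nat.cast_sum, Nat.sum_divisors hn₀]
  push_cast
  refine prod_lt_prod_of_nonempty (fun p hp => ?_) (fun p hp => ?_) hne
  · have := (Nat.prime_of_mem_primeFactors hp).pos
    positivity
  · have hp : (1 : ℝ) < p := by exact_mod_cast (Nat.prime_of_mem_primeFactors hp).one_lt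
    calc ∑ i ∈ range (n.factorization p + 1), (p : ℝ) ^ i
        < (p : ℝ) ^ (n.factorization p + 1) / (p - 1) := geom_sum_lt_pow_div_sub_one hp _
      _ = (p : ℝ) ^ n.factorization p * (p / (p - 1)) := by rw [pow_succ, mul_div_assoc]

lemma prod_filter_prime_one_sub_inv_sq_inv_le (s : Finset ℕ) :
    ∏ p ∈ s with p.Prime, (1 - ((p : ℝ) ^ 2)⁻¹)⁻¹ ≤ π ^ 2 / 6 := by
  let f : ℕ →* ℝ :=
    { toFun := fun n => ((n : ℝ) ^ 2)⁻¹
      map_one' := by simp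
      map_mul' := fun a b => by simp [mul_pow, mul_comm] }
  have hf : Summable f := hasSum_zeta_two.summable.congr fun n => by simp [f]
  calc ∏ p ∈ s with p.Prime, (1 - ((p : ℝ) ^ 2)⁻¹)⁻¹
      = ∑' m : Nat.factoredNumbers s, f m :=
        EulerProduct.prod_filter_prime_geometric_eq_tsum_factoredNumbers hf s
    _ ≤ ∑' m, f m := hf.tsum_subtype_le f _ fun n => by
        simp only [f, MonoidHom.coe_mk, OneHom.coe_mk]
        positivity
    _ = π ^ 2 / 6 := by simpa [f] using hasSum_zeta_two.tsum_eq

lemma prod_le_prod_Ico_nth_prime {R : Type*} [CommSemiring R] [PartialOrder R]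
    [IsOrderedRing R] {f : ℕ → R} (hf : AntitoneOn f {p | p.Prime})
    (hf₀ : ∀ p, p.Prime → 0 ≤ f p) {s : Finset ℕ} (hs : ∀ p ∈ s, p.Prime) {a : ℕ}
    (ha : ∀ p ∈ s, Nat.nth Nat.Prime a ≤ p) :
    ∏ p ∈ s, f p ≤ ∏ c ∈ Ico a (a + #s), f (Nat.nth Nat.Prime c) := by
  have hinj : Set.InjOn (Nat.count Nat.Prime) s := fun p hp q hq =>
    Nat.count_injective (hs p hp) (hs q hq)
  have hprod : ∏ p ∈ s, f p = ∏ c ∈ s.image (Nat.count Nat.Prime), f (Nat.nth Nat.Prime c) := by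
    rw [prod_image hinj]
    exact prod_congr rfl fun p hp => by rw [Nat.nth_count (hs p hp)]
  rw [hprod, ← card_image_of_injOn hinj]
  refine prod_le_prod_Ico_of_antitone ?_ (fun c => hf₀ _ (Nat.prime_nth_prime c)) ?_
  · exact fun c d hcd => hf (Nat.prime_nth_prime c) (Nat.prime_nth_prime d)
      (Nat.nth_monotone Nat.infinite_setOfPred_prime hcd)
  · simp only [mem_image, forall_exists_index, and_imp, forall_apply_eq_imp_iff₂]
    intro p hp
    rw [← Nat.count_nth_of_infinite Nat.infinite_setOfPred_prime a]
    exact Nat.count_monotone _ (ha p hp)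

lemma Odd.three_le_of_mem_primeFactors {n p : ℕ} (hn : Odd n) (hp : p ∈ n.primeFactors) :
    3 ≤ p := by
  have hp2 : p ≠ 2 := by
    rintro rfl
    exact Nat.not_even_iff_odd.2 hn (even_iff_two_dvd.2 (Nat.dvd_of_mem_primeFactors hp))
  have := (Nat.prime_of_mem_primeFactors hp).two_le
  omega

lemma Nat.Perfect.one_lt_s10 {n : ℕ} (hn : n.Perfect) : 1 < n :=
  lt_of_le_of_ne hn.2 (by rintro rfl; simp [Nat.Perfect] at hn)

lemma Nat.Perfect.two_lt_prod_primeFactors {n : ℕ} (hn : n.Perfect) :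
    2 < ∏ p ∈ n.primeFactors, (p : ℝ) / (p - 1) := by
  have hσ := (Nat.perfect_iff_sum_divisors_eq_two_mul hn.2).1 hn
  have hlt := sum_divisors_lt_mul_prod_primeFactors hn.one_lt_s10
  rw [← Nat.cast_sum, hσ, Nat.cast_mul, Nat.cast_two, mul_comm] at hlt
  exact lt_of_mul_lt_mul_left hlt (Nat.cast_nonneg n)

lemma Nat.Perfect.sixteen_div_pi_sq_lt_prod_primeFactors {n : ℕ} (hn : n.Perfect)
    (hodd : Odd n) : 16 / π ^ 2 < ∏ p ∈ n.primeFactors, (1 + 1 / (p : ℝ)) := by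
  have h2 : 2 ∉ n.primeFactors := fun h => by
    simpa using hodd.three_le_of_mem_primeFactors h
  have hprime : ∀ p ∈ insert 2 n.primeFactors, p.Prime := by
    simp only [mem_insert, forall_eq_or_imp]
    exact ⟨Nat.prime_two, fun p => Nat.prime_of_mem_primeFactors⟩
  have hEuler := prod_filter_prime_one_sub_inv_sq_inv_le (insert 2 n.primeFactors)
  rw [filter_true_of_mem hprime, prod_insert h2] at hEuler
  have hsplit : ∏ p ∈ n.primeFactors, (p : ℝ) / (p - 1) =
      (∏ p ∈ n.primeFactors, (1 + 1 / (p : ℝ))) *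
        ∏ p ∈ n.primeFactors, (1 - ((p : ℝ) ^ 2)⁻¹)⁻¹ := by
    rw [← prod_mul_distrib]
    refine prod_congr rfl fun p hp => div_sub_one_eq_one_add_one_div_mul ?_ ?_
    · exact_mod_cast (Nat.prime_of_mem_primeFactors hp).ne_zero
    · have : 2 ≤ p := (Nat.prime_of_mem_primeFactors hp).two_le
      exact_mod_cast (Nat.one_lt_pow two_ne_zero (by omega)).ne'
  have hlt := hn.two_lt_prod_primeFactors
  rw [hsplit] at hlt
  set A := ∏ p ∈ n.primeFactors, (1 + 1 / (p : ℝ))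
  have hA : 0 ≤ A := prod_nonneg fun p _ => by positivity
  rw [show (1 - (((2 : ℕ) : ℝ) ^ 2)⁻¹)⁻¹ = 4 / 3 by norm_num] at hEuler
  rw [div_lt_iff₀ (by positivity)]
  nlinarith

theorem opn_second_prime_product_gt_general (n m r : ℕ) (hn : Nat.Perfect n) (hodd : Odd n)
    (hm : n.primeFactors.card = m) (hr : 1 ≤ r)
    (hsecond : (Finset.sort n.primeFactors (· ≤ ·))[1]! = Nat.nth Nat.Prime (r - 1)) :
    (1 + 1 / 3 : ℝ) *
        ∏ j ∈ Finset.Icc r (r + m - 2), (1 + 1 / (Nat.nth Nat.Prime (j - 1) : ℝ)) >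
      16 / Real.pi ^ 2 := by
  have hS : n.primeFactors.Nonempty := Nat.nonempty_primeFactors.2 hn.one_lt_s10
  set q := n.primeFactors.min' hS
  have hsmallest : 1 + 1 / (q : ℝ) ≤ 1 + 1 / 3 := by
    gcongr
    exact_mod_cast hodd.three_le_of_mem_primeFactors (min'_mem _ hS)
  have hrest : ∏ p ∈ n.primeFactors.erase q, (1 + 1 / (p : ℝ)) ≤
      ∏ j ∈ Icc r (r + m - 2), (1 + 1 / (Nat.nth Nat.Prime (j - 1) : ℝ)) := by
    calc ∏ p ∈ n.primeFactors.erase q, (1 + 1 / (p : ℝ))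
        ≤ ∏ c ∈ Ico (r - 1) (r - 1 + (m - 1)), (1 + 1 / (Nat.nth Nat.Prime c : ℝ)) := by
          rw [← hm, ← card_erase_of_mem (min'_mem _ hS)]
          exact prod_le_prod_Ico_nth_prime
            (antitoneOn_one_add_one_div_natCast.mono fun p hp => Nat.pos_of_ne_zero hp.ne_zero)
            (fun p _ => by positivity)
            (fun p hp => Nat.prime_of_mem_primeFactors (mem_of_mem_erase hp))
            (fun p hp => hsecond ▸ sort_getElem!_one_le hS hp)
      _ = ∏ j ∈ Icc r (r + m - 2), (1 + 1 / (Nat.nth Nat.Prime (j - 1) : ℝ)) := by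
          refine prod_nbij' (· + 1) (· - 1) ?_ ?_ (fun c _ => rfl) ?_ (fun c _ => rfl) <;>
            intro j hj <;> simp only [mem_Ico, mem_Icc] at hj ⊢ <;> omega
  have key := hn.sixteen_div_pi_sq_lt_prod_primeFactors hodd
  rw [← insert_erase (min'_mem _ hS), prod_insert (notMem_erase _ _)] at key
  exact key.trans_le (mul_le_mul hsmallest hrest (prod_nonneg fun _ _ => by positivity)
    (by norm_num))

/-- Let `n` be an odd perfect number with exactly `m ≥ 2` distinct prime factors whose
second smallest prime factor is the `r`-th prime (1-indexed, so the 1st prime is 2). Then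
`(1 + 1/3) · ∏_{j=r}^{r+m-2} (1 + 1/p_j) > 16/π²`. -/
theorem opn_second_prime_product_gt (n m r : ℕ) (hn : Nat.Perfect n) (hodd : Odd n)
    (hm : n.primeFactors.card = m) (hm2 : 2 ≤ m) (hr : 1 ≤ r)
    (hsecond : (Finset.sort n.primeFactors (· ≤ ·))[1]! = Nat.nth Nat.Prime (r - 1)) :
    (1 + 1 / 3 : ℝ) *
        ∏ j ∈ Finset.Icc r (r + m - 2), (1 + 1 / (Nat.nth Nat.Prime (j - 1) : ℝ)) >
      16 / Real.pi ^ 2 :=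
  opn_second_prime_product_gt_general n m r hn hodd hm hr hsecond
end

section
/- If n is an odd perfect number with exactly 9 distinct prime factors, then the second smallest prime factor of n is at most 31. -/
/-!
Since `σ(pᵏ)/pᵏ < p/(p-1)`, a perfect number `n` satisfies
`2 = σ(n)/n < ∏_{p ∣ n} p/(p-1)`.
The factor `p/(p-1)` decreases in `p`, so if `n` is odd with nine prime factors, the smallest
at least `3` and the other eight at least `32`, the product is at most `(3/2)(32/31)⁸ ≈ 1.93`.
-/

open ArithmeticFunction Finset
open scoped ArithmeticFunction.sigma

lemma div_sub_one_le_div_sub_one {a b : ℕ} (ha : 2 ≤ a) (hab : a ≤ b) :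
    (b : ℚ) / (b - 1) ≤ a / (a - 1) := by
  have ha' : (2 : ℚ) ≤ a := by exact_mod_cast ha
  have hab' : (a : ℚ) ≤ b := by exact_mod_cast hab
  rw [div_le_div_iff₀ (by linarith) (by linarith)]
  nlinarith

lemma div_sub_one_nonneg (p : ℕ) : 0 ≤ (p : ℚ) / (p - 1) := by
  rcases p with _ | p
  · simp
  · push_cast; rw [add_sub_cancel_right]; positivity

lemma sigma_one_prime_pow_div_lt {p : ℕ} (hp : p.Prime) (k : ℕ) :
    (σ 1 (p ^ k) : ℚ) / p ^ k < p / (p - 1) := by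
  have hp1 : (1 : ℚ) < p := by exact_mod_cast hp.one_lt
  have hgeom : (σ 1 (p ^ k) : ℚ) * (p - 1) = p ^ (k + 1) - 1 := by
    rw [sigma_one_apply_prime_pow hp]
    push_cast
    exact geom_sum_mul _ _
  rw [div_lt_div_iff₀ (by positivity) (by linarith), hgeom, pow_succ]
  linarith

lemma sigma_one_div_lt_prod_primeFactors {n : ℕ} (hn : 1 < n) :
    (σ 1 n : ℚ) / n < ∏ p ∈ n.primeFactors, (p : ℚ) / (p - 1) := by
  have hn0 : n ≠ 0 := by omega
  have hσ : (σ 1 n : ℚ) = ∏ p ∈ n.primeFactors, (σ 1 (p ^ n.factorization p) : ℚ) := by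
    rw [isMultiplicative_sigma.multiplicative_factorization _ hn0, Finsupp.prod,
      Nat.support_factorization, Nat.cast_prod]
  have hpow : (n : ℚ) = ∏ p ∈ n.primeFactors, (p : ℚ) ^ n.factorization p := by
    conv_lhs => rw [← Nat.prod_factorization_pow_eq_self hn0]
    rw [Finsupp.prod, Nat.support_factorization, Nat.cast_prod]
    push_cast; rfl
  rw [hσ, hpow, ← prod_div_distrib]
  refine prod_lt_prod_of_nonempty (fun p hp => ?_) (fun p hp => ?_)
    (Nat.nonempty_primeFactors.mpr hn)
  · have := (Nat.prime_of_mem_primeFactors hp).pos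
    have : 0 < σ 1 (p ^ n.factorization p) := by
      rw [sigma_pos_iff]; positivity
    positivity
  · exact sigma_one_prime_pow_div_lt (Nat.prime_of_mem_primeFactors hp) _

lemma two_lt_prod_primeFactors_of_perfect {n : ℕ} (hn : n.Perfect) :
    2 < ∏ p ∈ n.primeFactors, (p : ℚ) / (p - 1) := by
  have h1 : 1 < n := lt_of_le_of_ne hn.2 (by rintro rfl; simp [Nat.Perfect] at hn)
  have hσ : σ 1 n = 2 * n := by
    rw [sigma_one_apply]; exact (Nat.perfect_iff_sum_divisors_eq_two_mul hn.2).mp hn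
  have := sigma_one_div_lt_prod_primeFactors h1
  rwa [hσ, Nat.cast_mul, Nat.cast_ofNat, mul_div_assoc, div_self (by positivity), mul_one] at this

lemma prod_div_sub_one_le_of_le_sort_one {s : Finset ℕ} {k a b : ℕ} (hs : s.card = k + 2)
    (ha : 2 ≤ a) (has : ∀ p ∈ s, a ≤ p) (hb : 2 ≤ b) (hbs : b ≤ (s.sort)[1]!) :
    ∏ p ∈ s, (p : ℚ) / (p - 1) ≤ a / (a - 1) * (b / (b - 1)) ^ (k + 1) := by
  set e := s.orderEmbOfFin hs
  have he : ∀ i : Fin (k + 1), b ≤ e i.succ := fun i =>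
    calc b ≤ e (Fin.succ 0) := by rwa [orderEmbOfFin_apply, ← getElem!_pos]
      _ ≤ e i.succ := e.monotone (Fin.succ_le_succ_iff.mpr (Fin.zero_le i))
  rw [← map_orderEmbOfFin_univ s hs, prod_map, Fin.prod_univ_succ]
  refine mul_le_mul (div_sub_one_le_div_sub_one ha (has _ (orderEmbOfFin_mem _ _ _))) ?_
    (prod_nonneg fun _ _ => div_sub_one_nonneg _) (div_sub_one_nonneg _)
  calc ∏ i : Fin (k + 1), ((e i.succ : ℕ) : ℚ) / ((e i.succ : ℕ) - 1)
      ≤ ∏ _i : Fin (k + 1), (b : ℚ) / (b - 1) :=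
        prod_le_prod (fun _ _ => div_sub_one_nonneg _) fun i _ =>
          div_sub_one_le_div_sub_one hb (he i)
    _ = (b / (b - 1)) ^ (k + 1) := by rw [prod_const, card_univ, Fintype.card_fin]

/-- If `n` is an odd perfect number with exactly 9 distinct prime factors, then the
second smallest prime factor of `n` is at most 31. -/
theorem opn_nine_factors_second_le (n : ℕ) (hn : Nat.Perfect n) (hodd : Odd n)
    (hω : n.primeFactors.card = 9) :
    (Finset.sort n.primeFactors (· ≤ ·))[1]! ≤ 31 := by
  by_contra! h
  have three_le_of_mem : ∀ p ∈ n.primeFactors, 3 ≤ p := fun p hp => by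
    have := (Nat.prime_of_mem_primeFactors hp).two_le
    have := hodd.ne_two_of_dvd_nat (Nat.dvd_of_mem_primeFactors hp)
    omega
  have hlt := (two_lt_prod_primeFactors_of_perfect hn).trans_le
    (prod_div_sub_one_le_of_le_sort_one hω (by norm_num) three_le_of_mem (by norm_num) h)
  norm_num at hlt
end
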